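/- arXiv:1609.05471 — 2 statements merged into one kernel-verified Lean document; each statement's English description precedes it below -/
import Mathlib

section
/- Let J be a connected order ideal of P and suppose χ_J is a subgraph of the connected component D_r of H_P (so that J ⊆ ⋃_{Λ_i^P ∈ V(D_r)} Λ_i^P). If J ≠ ⋃_{Λ_i^P ∈ V(D_r)} Λ_i^P, then there exists some Λ_j^P ∈ V(D_r) such that J and Λ_j^P are adjacent in G_P. -/
attribute [local instance] Classical.propDecidable

noncomputable section

open Finset

variable {n : ℕ}

/-- The comparability graph of the poset structure `P` on `Fin n`; for an order
ideal of `P`, connectivity of its induced subgraph in this graph agrees with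
connectivity of the Hasse diagram. -/
def compGraph (P : PartialOrder (Fin n)) : SimpleGraph (Fin n) where
  Adj i j := i ≠ j ∧ (P.le i j ∨ P.le j i)
  symm := by
    constructor
    intro i j h
    exact ⟨h.1.symm, h.2.symm⟩
  loopless := by
    constructor
    intro i h
    exact h.1 rfl

/-- `J` is an order ideal of the poset `P`. -/
def IsIdeal (P : PartialOrder (Fin n)) (J : Finset (Fin n)) : Prop :=
  ∀ i ∈ J, ∀ j : Fin n, P.le j i → j ∈ J

/-- The Hasse diagram of `J` as a subposet of `P` is a connected graph. -/
def JConn (P : PartialOrder (Fin n)) (J : Finset (Fin n)) : Prop :=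
  ((compGraph P).induce (↑J : Set (Fin n))).Connected

/-- `J` is a connected order ideal of `P`. -/
def IsConnIdeal (P : PartialOrder (Fin n)) (J : Finset (Fin n)) : Prop :=
  IsIdeal P J ∧ JConn P J

/-- The type of connected order ideals of `P` (the vertices of `G_P`). -/
abbrev ConnIdeal (P : PartialOrder (Fin n)) : Type :=
  {J : Finset (Fin n) // IsConnIdeal P J}

instance (P : PartialOrder (Fin n)) : Fintype (ConnIdeal P) := Fintype.ofFinite _

/-- `A` and `B` intersect nontrivially. -/
def Nontriv (A B : Finset (Fin n)) : Prop :=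
  (A ∩ B).Nonempty ∧ ¬ A ⊆ B ∧ ¬ B ⊆ A

/-- The graph `G_P` on the connected order ideals of `P`, with two ideals
adjacent iff they intersect nontrivially. -/
def GP (P : PartialOrder (Fin n)) : SimpleGraph (ConnIdeal P) where
  Adj A B := Nontriv A.1 B.1
  symm := by
    constructor
    intro A B h
    exact ⟨by rw [Finset.inter_comm]; exact h.1, h.2.2, h.2.1⟩
  loopless := by
    constructor
    intro A h
    exact h.2.1 (Finset.Subset.refl _)

instance (P : PartialOrder (Fin n)) : Fintype ((GP P).ConnectedComponent) :=
  Fintype.ofFinite _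

instance (P : PartialOrder (Fin n)) : Fintype ((GP P).edgeSet) :=
  Fintype.ofFinite _

/-- `s` is an independent set of the graph `G`. -/
def IsIndep {V : Type*} (G : SimpleGraph V) (s : Finset V) : Prop :=
  ∀ a ∈ s, ∀ b ∈ s, ¬ G.Adj a b

/-- `s` is a maximum independent set of the graph `G`. -/
def IsMaxIndep {V : Type*} (G : SimpleGraph V) (s : Finset V) : Prop :=
  IsIndep G s ∧ ∀ t : Finset V, IsIndep G t → t.card ≤ s.card

/-- `s` is a maximum independent set of the subgraph of `G` induced on the
vertex set `S` (e.g. on a connected component of `G`). -/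
def IsMaxIndepOn {V : Type*} (G : SimpleGraph V) (S : Set V) (s : Finset V) : Prop :=
  ↑s ⊆ S ∧ IsIndep G s ∧ ∀ t : Finset V, ↑t ⊆ S → IsIndep G t → t.card ≤ s.card

/-- `μ(M, J) = ⋃_{J' ∈ M, J' ⊊ J} J'`. -/
def mu (P : PartialOrder (Fin n)) (M : Finset (ConnIdeal P)) (J : Finset (Fin n)) :
    Finset (Fin n) :=
  (M.filter (fun J' => J'.1 ⊂ J)).biUnion (fun J' => J'.1)

/-- The strict order relation of the poset `F_M` associated with a maximum
independent set `M` of `G_P`: `i <_{F_M} j` iff `J_a ⊊ J_b` where `J_a, J_b ∈ M`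
satisfy `J_a \ μ(M,J_a) = {i}` and `J_b \ μ(M,J_b) = {j}`. -/
def FMlt (P : PartialOrder (Fin n)) (M : Finset (ConnIdeal P)) (i j : Fin n) : Prop :=
  ∃ Ja ∈ M, ∃ Jb ∈ M,
    Ja.1 \ mu P M Ja.1 = {i} ∧ Jb.1 \ mu P M Jb.1 = {j} ∧ Ja.1 ⊂ Jb.1

/-- The order relation of the poset `F_M`. -/
def FMle (P : PartialOrder (Fin n)) (M : Finset (ConnIdeal P)) (i j : Fin n) : Prop :=
  i = j ∨ FMlt P M i j

/-- Strict relation associated with the relation `le`. -/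
def ltRel (le : Fin n → Fin n → Prop) (i j : Fin n) : Prop := le i j ∧ i ≠ j

/-- `j` covers `i` in the order given by the relation `le`. -/
def CovRel (le : Fin n → Fin n → Prop) (i j : Fin n) : Prop :=
  ltRel le i j ∧ ∀ k : Fin n, ltRel le i k → ¬ ltRel le k j

/-- The principal order ideal `Λ_i = {j : j ≤ i}` of the order given by `le`. -/
def LamRel (le : Fin n → Fin n → Prop) (i : Fin n) : Finset (Fin n) :=
  Finset.univ.filter (fun j => le j i)

/-- The descent set of a forest order given by the relation `le`:
elements `i` whose parent (the element covering `i`) is smaller than `i`. -/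
def DesRel (le : Fin n → Fin n → Prop) : Finset (Fin n) :=
  Finset.univ.filter (fun i => ∃ j : Fin n, CovRel le i j ∧ j < i)

/-- `Des(M) = Des(F_M)`. -/
def DesM (P : PartialOrder (Fin n)) (M : Finset (ConnIdeal P)) : Finset (Fin n) :=
  DesRel (FMle P M)

/-- `Des(M_r, M)`. -/
def DesMr (P : PartialOrder (Fin n)) (Mr M : Finset (ConnIdeal P)) : Finset (Fin n) :=
  (DesM P M).filter (fun i => ∃ J ∈ Mr, J.1 \ mu P M J.1 = {i})

/-- `Des̄(M_r, M)`. -/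
def DesBarMr (P : PartialOrder (Fin n)) (Mr M : Finset (ConnIdeal P)) :
    Finset (ConnIdeal P) :=
  Mr.filter (fun J => ∃ i ∈ DesMr P Mr M, J.1 \ mu P M J.1 = {i})

/-- The relation `le` is (the order relation of) a `P`-forest: a partial order
whose Hasse diagram is a forest, all of whose principal order ideals are
connected order ideals of `P`, and such that for incomparable `i, j` the union
`Λ_i ∪ Λ_j` is a disconnected order ideal of `P`. -/
structure IsPForestRel (P : PartialOrder (Fin n)) (le : Fin n → Fin n → Prop) : Prop where
  refl : ∀ i, le i i
  trans : ∀ i j k, le i j → le j k → le i k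
  antisymm : ∀ i j, le i j → le j i → i = j
  forest : ∀ i j k, CovRel le i j → CovRel le i k → j = k
  connIdeal : ∀ i, IsConnIdeal P (LamRel le i)
  disc : ∀ i j : Fin n, ¬ le i j → ¬ le j i →
    IsIdeal P (LamRel le i ∪ LamRel le j) ∧ ¬ JConn P (LamRel le i ∪ LamRel le j)

/-- The principal order ideal `Λ_i^P` of `P`. -/
def PIdeal (P : PartialOrder (Fin n)) (i : Fin n) : Finset (Fin n) :=
  Finset.univ.filter (fun k => P.le k i)

/-- The generating set `gs(J)`: the maximal elements of `J` with respect to `P`. -/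
def gsJ (P : PartialOrder (Fin n)) (J : Finset (Fin n)) : Finset (Fin n) :=
  J.filter (fun i => ∀ j ∈ J, ¬ P.lt i j)

/-- `P` is naturally labeled. -/
def NatLabeled (P : PartialOrder (Fin n)) : Prop :=
  ∀ i j : Fin n, P.lt i j → i < j

/-- `U_max(M, J)`: the maximal members of `U(M,J) = {J' ∈ M : J' ⊊ J}`. -/
def Umax (P : PartialOrder (Fin n)) (M : Finset (ConnIdeal P)) (J : Finset (Fin n)) :
    Finset (ConnIdeal P) :=
  (M.filter (fun Ja => Ja.1 ⊂ J)).filter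
    (fun Ja => ∀ Jb ∈ M, Jb.1 ⊂ J → Jb ≠ Ja → ¬ Ja.1 ⊂ Jb.1)

/-- The set of vertices of `G_P` which are principal order ideals of `P`. -/
def PIdealSet (P : PartialOrder (Fin n)) : Set (ConnIdeal P) :=
  {A : ConnIdeal P | ∃ i : Fin n, A.1 = PIdeal P i}

/-- The graph `H_P`: the subgraph of `G_P` induced by the principal order ideals. -/
def HP (P : PartialOrder (Fin n)) : SimpleGraph (PIdealSet P) :=
  (GP P).induce (PIdealSet P)

/-- `f` is a `P`-partition. -/
def IsPPartition (P : PartialOrder (Fin n)) (f : Fin n → ℕ) : Prop :=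
  (∀ i j : Fin n, P.lt i j → f j ≤ f i) ∧
  (∀ i j : Fin n, P.lt i j → j < i → f j < f i)

/-- The monomial `∏_{k ∈ J} x_k`. -/
def xJ (J : Finset (Fin n)) : MvPowerSeries (Fin n) ℚ :=
  ∏ k ∈ J, MvPowerSeries.X k

/-- The set of linear extensions of `P`, viewed as permutations `w` of `Fin n`
(in positions `0, …, n-1`) such that `i < j` whenever `w i <_P w j`. -/
def LinExts (P : PartialOrder (Fin n)) : Finset (Equiv.Perm (Fin n)) :=
  Finset.univ.filter (fun w => ∀ i j : Fin n, P.lt (w i) (w j) → i < j)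

/-- The major index of a permutation (with 1-indexed positions). -/
def maj (w : Equiv.Perm (Fin n)) : ℕ :=
  ∑ i ∈ Finset.univ.filter
      (fun i : Fin n => ∃ h : (i : ℕ) + 1 < n, w ⟨(i : ℕ) + 1, h⟩ < w i),
    ((i : ℕ) + 1)

/-- The finset of maximum independent sets of the connected component `c` of `G_P`. -/
def MaxIndepsOn (P : PartialOrder (Fin n)) (c : (GP P).ConnectedComponent) :
    Finset (Finset (ConnIdeal P)) :=
  Finset.univ.filter (fun Mr : Finset (ConnIdeal P) => IsMaxIndepOn (GP P) c.supp Mr)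

/-!
Every element of `J` lies below a maximal one, so `J ⊆ ⋃_{Λ ∈ V(D)} Λ`; as the two differ, some
`Λ ∈ V(D)` is not contained in `J`, while `Λ_m ⊆ J` for `m ∈ gs(J)`. Along a path in `D` from
`Λ_m` to `Λ`, the first vertex not contained in `J` follows one contained in `J` and adjacent to it;
so it meets `J`, and it does not contain `J`, since it does not contain its predecessor.
-/

lemma SimpleGraph.ConnectedComponent.exists_adj_mem_notMem {V : Type*} {G : SimpleGraph V}
    {C : G.ConnectedComponent} {S : Set V} {u w : V} (hu : G.connectedComponentMk u = C)
    (huS : u ∈ S) (hw : G.connectedComponentMk w = C) (hwS : w ∉ S) :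
    ∃ a b, G.Adj a b ∧ a ∈ S ∧ b ∉ S ∧ G.connectedComponentMk b = C := by
  obtain ⟨p⟩ := ConnectedComponent.exact (hu.trans hw.symm)
  obtain ⟨d, hd, hdS, hdS'⟩ := p.exists_boundary_dart S huS hwS
  have hdw : G.Reachable d.snd w :=
    (p.dropUntil d.snd (p.dart_snd_mem_support_of_mem_darts hd)).reachable
  exact ⟨d.fst, d.snd, d.adj, hdS, hdS', (ConnectedComponent.sound hdw).trans hw⟩

lemma mem_pIdeal {P : PartialOrder (Fin n)} {i k : Fin n} : k ∈ PIdeal P i ↔ P.le k i := by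
  simp only [PIdeal, mem_filter, mem_univ, true_and]

lemma pIdeal_isConnIdeal (P : PartialOrder (Fin n)) (i : Fin n) :
    IsConnIdeal P (PIdeal P i) := by
  refine ⟨fun j hj k hkj => mem_pIdeal.2 (P.le_trans _ _ _ hkj (mem_pIdeal.1 hj)), ?_⟩
  -- every element of `Λ_i` is comparable with `i`, so `i` reaches all of them
  rw [JConn, SimpleGraph.connected_iff_exists_forall_reachable]
  refine ⟨⟨i, mem_coe.2 (mem_pIdeal.2 (P.le_refl i))⟩, fun ⟨j, hj⟩ => ?_⟩
  rcases eq_or_ne j i with rfl | hji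
  · rfl
  · exact SimpleGraph.Adj.reachable ⟨hji.symm, Or.inr (mem_pIdeal.1 (mem_coe.1 hj))⟩

def pIdealVertex (P : PartialOrder (Fin n)) (i : Fin n) : PIdealSet P :=
  ⟨⟨PIdeal P i, pIdeal_isConnIdeal P i⟩, i, rfl⟩

lemma pIdeal_subset_of_mem {P : PartialOrder (Fin n)} {J : Finset (Fin n)}
    (hJ : IsIdeal P J) {i : Fin n} (hi : i ∈ J) : PIdeal P i ⊆ J := fun k hk =>
  hJ i hi k (mem_pIdeal.1 hk)

lemma exists_mem_gsJ_le (P : PartialOrder (Fin n)) {J : Finset (Fin n)} {x : Fin n}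
    (hx : x ∈ J) : ∃ m ∈ gsJ P J, P.le x m := by
  obtain ⟨m, hxm, hm⟩ := @Finset.exists_le_maximal (Fin n) P.toPreorder x J hx
  refine ⟨m, mem_filter.2 ⟨hm.1, fun j hj hmj => ?_⟩, hxm⟩
  obtain ⟨hmj, hjm⟩ := (P.lt_iff_le_not_ge m j).1 hmj
  exact hjm (hm.2 hj hmj)

lemma nontriv_of_subset {A B J : Finset (Fin n)} (hAJ : A ⊆ J) (hAB : Nontriv A B)
    (hBJ : ¬ B ⊆ J) : Nontriv J B :=
  ⟨hAB.1.mono (inter_subset_inter_right hAJ), fun hJB => hAB.2.1 (hAJ.trans hJB), hBJ⟩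

/-- Lemma 3.3(2): let `J` be a connected order ideal of `P`
such that `χ_J` is a subgraph of the connected component `D` of `H_P`.  If
`J ≠ ⋃_{Λ_i^P ∈ V(D)} Λ_i^P`, then `J` is adjacent in `G_P` to some vertex
`Λ_j^P ∈ V(D)`. -/
theorem statement_12 (n : ℕ) (P : PartialOrder (Fin n))
    (J : ConnIdeal P) (D : (HP P).ConnectedComponent)
    (hchi : ∀ v : ↥(PIdealSet P), (∃ i ∈ gsJ P J.1, v.1.1 = PIdeal P i) →
      (HP P).connectedComponentMk v = D)
    (hne : (↑J.1 : Set (Fin n)) ≠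
      ⋃ v ∈ {v : ↥(PIdealSet P) | (HP P).connectedComponentMk v = D},
        (↑(v.1.1) : Set (Fin n))) :
    ∃ v : ↥(PIdealSet P),
      (HP P).connectedComponentMk v = D ∧ (GP P).Adj J v.1 := by
  have hgsD : ∀ i ∈ gsJ P J.1, (HP P).connectedComponentMk (pIdealVertex P i) = D :=
    fun i hi => hchi _ ⟨i, hi, rfl⟩
  obtain ⟨⟨x, hx⟩⟩ := J.2.2.nonempty
  obtain ⟨m, hm, -⟩ := exists_mem_gsJ_le P (mem_coe.1 hx)
  have hmJ : (pIdealVertex P m).1.1 ⊆ J.1 := pIdeal_subset_of_mem J.2.1 (mem_filter.1 hm).1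
  obtain ⟨w, hwD, hwJ⟩ : ∃ w : PIdealSet P,
      (HP P).connectedComponentMk w = D ∧ ¬ w.1.1 ⊆ J.1 := by
    by_contra! hDJ
    refine hne (subset_antisymm (fun y hy => ?_) (Set.iUnion₂_subset fun v hv => ?_))
    · obtain ⟨k, hk, hyk⟩ := exists_mem_gsJ_le P (mem_coe.1 hy)
      exact Set.mem_biUnion (hgsD k hk) (mem_coe.2 (mem_pIdeal.2 hyk))
    · exact coe_subset.2 (hDJ v hv)
  obtain ⟨a, b, hab, haJ, hbJ, hbD⟩ := SimpleGraph.ConnectedComponent.exists_adj_mem_notMem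
    (S := {v : PIdealSet P | v.1.1 ⊆ J.1}) (hgsD m hm) hmJ hwD hwJ
  exact ⟨b, hbD, nontriv_of_subset haJ hab hbJ⟩
end
end

section
/- Let C_r be a connected component of G_P with vertex set V(C_r). Then J_r^max = ⋃_{J' ∈ V(C_r)} J' is a connected order ideal of P and is an isolated vertex of the graph G_P (i.e., it is adjacent to no vertex of G_P). -/
attribute [local instance] Classical.propDecidable

noncomputable section

open Finset

variable {n : ℕ}

/-! Adjacent vertices of `G_P` share an element, which glues their Hasse diagrams together, so
walking through the component connects all of `J^max`. An ideal `B ⊄ J^max` cannot lie in the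
component, so it is adjacent to none of its members: each member meeting `B` is contained in `B`,
and this containment again propagates along walks, forcing `J^max ⊆ B`. -/

theorem SimpleGraph.ConnectedComponent.forall_mem_supp_of_adj {V : Type*} {G : SimpleGraph V}
    {C : G.ConnectedComponent} {p : V → Prop} {x₀ : V} (hx₀ : x₀ ∈ C.supp) (hp₀ : p x₀)
    (hstep : ∀ x y, x ∈ C.supp → y ∈ C.supp → G.Adj x y → p x → p y) : ∀ x ∈ C.supp, p x := by
  intro x hx
  have hreach : G.Reachable x₀ x :=
    SimpleGraph.ConnectedComponent.exact (hx₀.trans hx.symm)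
  rw [SimpleGraph.reachable_iff_reflTransGen] at hreach
  induction hreach with
  | refl => exact hp₀
  | @tail y z _ hyz ih =>
    have hy : y ∈ C.supp := (C.mem_supp_congr_adj hyz).2 hx
    exact hstep y z hy hx hyz (ih hy)

/-- The paper's `J_r^max`. -/
def componentUnion (P : PartialOrder (Fin n)) (c : (GP P).ConnectedComponent) :
    Finset (Fin n) :=
  Finset.univ.filter
    (fun k : Fin n => ∃ A : ConnIdeal P, (GP P).connectedComponentMk A = c ∧ k ∈ A.1)

section componentUnion

variable {P : PartialOrder (Fin n)} {c : (GP P).ConnectedComponent}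

theorem mem_componentUnion {k : Fin n} :
    k ∈ componentUnion P c ↔ ∃ A ∈ c.supp, k ∈ A.1 := by
  simp [componentUnion]

theorem subset_componentUnion {A : ConnIdeal P} (hA : A ∈ c.supp) :
    A.1 ⊆ componentUnion P c :=
  fun _ hk => mem_componentUnion.2 ⟨A, hA, hk⟩

theorem isIdeal_componentUnion : IsIdeal P (componentUnion P c) := by
  intro i hi j hji
  obtain ⟨A, hA, hiA⟩ := mem_componentUnion.1 hi
  exact mem_componentUnion.2 ⟨A, hA, A.2.1 i hiA j hji⟩

theorem reachable_induce_componentUnion {A : ConnIdeal P} (hA : A ∈ c.supp)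
    {u v : Fin n} (hu : u ∈ A.1) (hv : v ∈ A.1) :
    ((compGraph P).induce (componentUnion P c : Set (Fin n))).Reachable
      ⟨u, subset_componentUnion hA hu⟩ ⟨v, subset_componentUnion hA hv⟩ :=
  (A.2.2.preconnected ⟨u, hu⟩ ⟨v, hv⟩).map
    ((compGraph P).induceHomOfLE (Finset.coe_subset.2 (subset_componentUnion hA))).toHom

theorem jConn_componentUnion : JConn P (componentUnion P c) := by
  obtain ⟨A₀, hA₀⟩ := c.nonempty_supp
  obtain ⟨⟨u, hu⟩⟩ := A₀.2.2.nonempty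
  set u' : (componentUnion P c : Set (Fin n)) := ⟨u, subset_componentUnion hA₀ hu⟩
  rw [JConn, SimpleGraph.connected_iff_exists_forall_reachable]
  refine ⟨u', ?_⟩
  have hreach : ∀ B ∈ c.supp, ∀ v : (componentUnion P c : Set (Fin n)), v.1 ∈ B.1 →
      ((compGraph P).induce (componentUnion P c : Set (Fin n))).Reachable u' v := by
    refine c.forall_mem_supp_of_adj hA₀
      (fun v hv => reachable_induce_componentUnion hA₀ hu hv) ?_
    rintro X Y hX hY ⟨⟨w, hw⟩, -⟩ hreachX v hv
    rw [Finset.mem_inter] at hw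
    exact (hreachX ⟨w, subset_componentUnion hX hw.1⟩ hw.1).trans
      (reachable_induce_componentUnion hY hw.2 hv)
  rintro ⟨v, hv⟩
  obtain ⟨B, hB, hvB⟩ := mem_componentUnion.1 hv
  exact hreach B hB ⟨v, hv⟩ hvB

theorem subset_of_mem_supp_of_not_subset_componentUnion {B X : ConnIdeal P}
    (hBS : ¬ B.1 ⊆ componentUnion P c) (hX : X ∈ c.supp) (hXB : (X.1 ∩ B.1).Nonempty) :
    X.1 ⊆ B.1 := by
  by_contra hXB'
  by_cases hBX : B.1 ⊆ X.1
  · exact hBS (hBX.trans (subset_componentUnion hX))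
  · have hB : B ∈ c.supp := c.mem_supp_of_adj_mem_supp hX ⟨hXB, hXB', hBX⟩
    exact hBS (subset_componentUnion hB)

theorem componentUnion_subset_of_not_subset {B : ConnIdeal P}
    (hBS : ¬ B.1 ⊆ componentUnion P c) (hSB : (componentUnion P c ∩ B.1).Nonempty) :
    componentUnion P c ⊆ B.1 := by
  obtain ⟨y, hy⟩ := hSB
  rw [Finset.mem_inter] at hy
  obtain ⟨A, hA, hyA⟩ := mem_componentUnion.1 hy.1
  have hAB : A.1 ⊆ B.1 :=
    subset_of_mem_supp_of_not_subset_componentUnion hBS hA ⟨y, Finset.mem_inter.2 ⟨hyA, hy.2⟩⟩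
  have hsub : ∀ X ∈ c.supp, X.1 ⊆ B.1 := by
    refine c.forall_mem_supp_of_adj hA hAB ?_
    rintro X Y - hY ⟨⟨w, hw⟩, -⟩ hXB
    rw [Finset.mem_inter] at hw
    exact subset_of_mem_supp_of_not_subset_componentUnion hBS hY
      ⟨w, Finset.mem_inter.2 ⟨hw.2, hXB hw.1⟩⟩
  intro k hk
  obtain ⟨X, hX, hkX⟩ := mem_componentUnion.1 hk
  exact hsub X hX hkX

end componentUnion

/-- Lemma 3.4(1): for a connected component `C` of `G_P`, the
union `J^max = ⋃_{J' ∈ V(C)} J'` is a connected order ideal of `P` and is an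
isolated vertex of `G_P`, i.e. it intersects no connected order ideal
nontrivially. -/
theorem statement_13 (n : ℕ) (P : PartialOrder (Fin n))
    (c : (GP P).ConnectedComponent) :
    IsConnIdeal P (Finset.univ.filter
      (fun k : Fin n => ∃ A : ConnIdeal P,
        (GP P).connectedComponentMk A = c ∧ k ∈ A.1)) ∧
    ∀ B : ConnIdeal P,
      ¬ Nontriv (Finset.univ.filter
        (fun k : Fin n => ∃ A : ConnIdeal P,
          (GP P).connectedComponentMk A = c ∧ k ∈ A.1)) B.1 := by
  refine ⟨⟨isIdeal_componentUnion, jConn_componentUnion⟩, ?_⟩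
  rintro B ⟨hSB, hnotSB, hnotBS⟩
  exact hnotSB (componentUnion_subset_of_not_subset hnotBS hSB)
end
end
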